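/- arXiv:2111.03856 — 2 statements merged into one kernel-verified Lean document; each statement's English description precedes it below -/
import Mathlib

section
/- Let 𝒜 be a family of generic assignments for a multi-sorted relational signature L, and let P_𝒜 be the forcing whose conditions are finite sets of atomic or negated atomic L-sentences contained in Σ_ν for some ν ∈ 𝒜, ordered by reverse inclusion. Let H be a filter on P_𝒜 generic for a family of dense sets, and Σ_H = ⋃H. Then for any L-sentence ⋀_{i∈I} ⋁_{j∈J_i} ψ_{ij} of ⋀⋁-type (each ψ_{ij} atomic or negated atomic), the term model M_{Σ_H} satisfies ⋀_{i∈I} ⋁_{j∈J_i} ψ_{ij} if and only if for every i ∈ I the set D_i = { q ∈ P_𝒜 : ψ_{ij} ∈ q for some j ∈ J_i } is dense below some condition p ∈ H. -/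
/- `Sent` is the type of atomic and negated atomic sentences of the signature `L`.
A generic assignment `ν` is abstracted by the set `Σ_ν` of atomic/negated atomic sentences
it realizes; `A` is the family of these sets. -/

/-- The conditions of the consistency-property forcing `P_𝒜`: finite sets of atomic or
negated atomic sentences contained in `Σ_ν` for some assignment `ν ∈ 𝒜`
(ordered by reverse inclusion: `q` extends `p` iff `p ⊆ q`). -/
def CondSet {Sent : Type} (A : Set (Set Sent)) : Set (Finset Sent) :=
  {p | ∃ Sig ∈ A, (↑p : Set Sent) ⊆ Sig}

/-- Lemma on consistency-property forcings: for a `V`-generic filter `H` on `P_𝒜` and a sentence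
`⋀_{i∈I} ⋁_{j∈J_i} ψ_{ij}` of `⋀⋁`-type, the term model `M_{Σ_H}` satisfies it
(for atomic or negated atomic sentences, satisfaction in the term model of the maximally
consistent set `Σ_H = ⋃ H` is exactly membership in `Σ_H`) if and only if
each `D_i = { q ∈ P_𝒜 : ψ_{ij} ∈ q for some j ∈ J_i }` is dense below some `p ∈ H`. -/
theorem term_model_AndOr_iff_dense {Sent : Type} (A : Set (Set Sent))
    (H : Set (Finset Sent)) (hHsub : H ⊆ CondSet A)
    -- `H` is a filter on `P_𝒜`:
    (hup : ∀ p ∈ H, ∀ q ∈ CondSet A, q ⊆ p → q ∈ H)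
    (hdir : ∀ p ∈ H, ∀ q ∈ H, ∃ r ∈ H, p ⊆ r ∧ q ⊆ r)
    -- `H` is generic: it meets every dense subset of `P_𝒜`:
    (hgen : ∀ D : Set (Finset Sent),
      (∀ p ∈ CondSet A, ∃ q ∈ D, q ∈ CondSet A ∧ p ⊆ q) → (H ∩ D).Nonempty)
    {I : Type} {J : I → Type} (ψ : (i : I) → J i → Sent) :
    -- `M_{Σ_H} ⊨ ⋀_i ⋁_j ψ_{ij}`, i.e. for every `i` some `ψ_{ij}` belongs to `Σ_H = ⋃ H`
    (∀ i, ∃ j, ψ i j ∈ ⋃ p ∈ H, (↑p : Set Sent)) ↔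
    -- iff for every `i`, `D_i` is dense below some condition `p ∈ H`
    (∀ i, ∃ p ∈ H, ∀ q ∈ CondSet A, p ⊆ q →
      ∃ r ∈ CondSet A, q ⊆ r ∧ ∃ j, ψ i j ∈ r) := by
  constructor
  · intro h i
    obtain ⟨j, hj⟩ := h i
    simp only [Set.mem_iUnion] at hj
    obtain ⟨p, hpH, hjp⟩ := hj
    exact ⟨p, hpH, fun q hq hpq => ⟨q, hq, subset_rfl, j, hpq hjp⟩⟩
  · intro h i
    obtain ⟨p, hpH, hdense⟩ := h i
    -- the dense set: either contains some ψ i j, or is incompatible with p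
    set D : Set (Finset Sent) :=
      {q | (∃ j, ψ i j ∈ q) ∨ ¬∃ t ∈ CondSet A, q ⊆ t ∧ p ⊆ t} with hD
    have hDdense : ∀ s ∈ CondSet A, ∃ q ∈ D, q ∈ CondSet A ∧ s ⊆ q := by
      intro s hs
      by_cases hcomp : ∃ t ∈ CondSet A, s ⊆ t ∧ p ⊆ t
      · obtain ⟨t, ht, hst, hpt⟩ := hcomp
        obtain ⟨r, hr, htr, j, hjr⟩ := hdense t ht hpt
        exact ⟨r, Or.inl ⟨j, hjr⟩, hr, hst.trans htr⟩
      · exact ⟨s, Or.inr hcomp, hs, subset_rfl⟩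
    obtain ⟨q, hqH, hqD⟩ := hgen D hDdense
    rcases hqD with ⟨j, hjq⟩ | hincomp
    · refine ⟨j, ?_⟩
      simp only [Set.mem_iUnion]
      exact ⟨q, hqH, hjq⟩
    · exfalso
      obtain ⟨r, hrH, hpr, hqr⟩ := hdir p hpH q hqH
      exact hincomp ⟨r, hHsub hrH, hqr, hpr⟩
end

section
/- Assume ⟨C_α : α < κ⟩ is a □-like sequence on κ: C_α is club in α for each limit α < κ, otp(C_α) ≤ θ for all α, and C_α = C_β ∩ α whenever α is a limit point of C_β. Let η < κ be a limit ordinal of uncountable cofinality and suppose S ⊆ η is stationary in η and there is an ordinal ξ with otp(C_λ) = ξ for all λ ∈ S. Then we reach a contradiction; i.e., no such stationary S with constant order-type of its C's exists below a point of uncountable cofinality. -/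
/-- `α` is a limit point of the set of ordinals `C`: `sup(C ∩ α) = α > 0`. -/
def IsLimitPt (C : Set Ordinal) (α : Ordinal) : Prop :=
  0 < α ∧ ∀ β < α, ∃ γ ∈ C, β < γ ∧ γ < α

/-- `C` is club in `η`: a subset of `η` that is closed (contains its limit points below `η`)
and unbounded in `η`. -/
def IsClubIn (C : Set Ordinal) (η : Ordinal) : Prop :=
  C ⊆ Set.Iio η ∧ (∀ α < η, IsLimitPt C α → α ∈ C) ∧ (∀ β < η, ∃ γ ∈ C, β < γ)

/-- `S` is stationary in `η`: it meets every club subset of `η`. -/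
def IsStatIn (S : Set Ordinal) (η : Ordinal) : Prop :=
  ∀ C, IsClubIn C η → (S ∩ C).Nonempty

/-- The order type of a set of ordinals. -/
noncomputable def otp (s : Set Ordinal) : Ordinal :=
  Ordinal.type (Subrel ((· < ·) : Ordinal → Ordinal → Prop) (· ∈ s))

lemma otp_inter_lt {s : Set Ordinal} {α : Ordinal} (hα : α ∈ s) :
    otp (s ∩ Set.Iio α) < otp s := by
  refine PrincipalSeg.ordinal_type_lt
    ⟨⟨⟨fun x => ⟨x.1, x.2.1⟩, ?_⟩, ?_⟩, ⟨α, hα⟩, ?_⟩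
  · rintro ⟨x, hx⟩ ⟨y, hy⟩ h
    simpa using Subtype.ext (congrArg Subtype.val h)
  · intro a b; exact Iff.rfl
  · rintro ⟨b, hb⟩
    constructor
    · rintro ⟨⟨x, hx⟩, he⟩
      have hxb : x = b := congrArg Subtype.val he
      subst hxb; exact hx.2
    · intro h; exact ⟨⟨b, ⟨hb, h⟩⟩, rfl⟩

/-- Assume `⟨C_α : α < κ⟩` is a `□`-like sequence on `κ` (for infinite cardinals `θ < κ`):
`C_α` is club in `α` for each limit `α < κ`, `otp(C_α) ≤ θ`, and `C_α = C_β ∩ α` whenever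
`α` is a limit point of `C_β`. Then there is no limit ordinal `η < κ` of uncountable
cofinality carrying a stationary `S ⊆ η` on which `otp(C_λ)` is constantly some `ξ`. -/
theorem no_stationary_constant_otp_square (θ κ : Cardinal.{0})
    (hθ : Cardinal.aleph0 ≤ θ) (hθκ : θ < κ)
    (C : Ordinal.{0} → Set Ordinal.{0})
    (hsub : ∀ α < κ.ord, C α ⊆ Set.Iio α)
    (hclub : ∀ α < κ.ord, Order.IsSuccLimit α → IsClubIn (C α) α)
    (hotp : ∀ α < κ.ord, otp (C α) ≤ Ordinal.lift.{1} θ.ord)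
    (hcoh : ∀ β < κ.ord, ∀ α, IsLimitPt (C β) α → C α = C β ∩ Set.Iio α)
    (η : Ordinal) (hηκ : η < κ.ord) (hηlim : Order.IsSuccLimit η)
    (hcof : Cardinal.aleph0 < η.cof)
    (S : Set Ordinal) (hSsub : S ⊆ Set.Iio η) (hstat : IsStatIn S η)
    (ξ : Ordinal) (hξ : ∀ lam ∈ S, otp (C lam) = ξ) :
    False := by
  obtain ⟨hCsub, hCcl, hCub⟩ := hclub η hηκ hηlim
  -- unboundedness of limit points above any β, within any set containing a tail condition
  have key : ∀ β < η, ∃ α, β < α ∧ α < η ∧ IsLimitPt (C η) α := by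
    intro β hβ
    -- build ω-chain
    have step : ∀ x < η, ∃ y ∈ C η, x < y := hCub
    choose g hg1 hg2 using step
    let f : ℕ → {x // x < η} := fun n =>
      Nat.rec ⟨g β hβ, hCsub (hg1 β hβ)⟩
        (fun _ p => ⟨g p.1 p.2, hCsub (hg1 p.1 p.2)⟩) n
    have hfC : ∀ n, (f n).1 ∈ C η := by
      intro n; cases n with
      | zero => exact hg1 β hβ
      | succ m => exact hg1 (f m).1 (f m).2
    have hmono : ∀ n, (f n).1 < (f (n+1)).1 := fun n => hg2 (f n).1 (f n).2
    have hsη : (⨆ n, (f n).1) < η := by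
      apply Ordinal.iSup_lt_ord _ (fun n => (f n).2)
      simpa using hcof
    have hle : ∀ n, (f n).1 ≤ ⨆ n, (f n).1 :=
      fun n => le_ciSup (Ordinal.bddAbove_range _) n
    have hf0 : (f 0).1 < ⨆ n, (f n).1 := lt_of_lt_of_le (hmono 0) (hle 1)
    refine ⟨⨆ n, (f n).1, lt_of_lt_of_le (hg2 β hβ) (hle 0), hsη,
      lt_of_le_of_lt zero_le hf0, ?_⟩
    intro x hx
    obtain ⟨n, hn⟩ := Ordinal.lt_iSup_iff.mp hx
    exact ⟨(f n).1, hfC n, hn, lt_of_lt_of_le (hmono n) (hle (n+1))⟩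
  -- D: limit points of C η
  set D : Set Ordinal := {α | α < η ∧ IsLimitPt (C η) α} with hD
  have hDclub : IsClubIn D η := by
    refine ⟨fun x hx => hx.1, ?_, ?_⟩
    · intro α hα hlp
      refine ⟨hα, hlp.1, ?_⟩
      intro β hβ
      obtain ⟨γ, hγD, hβγ, hγα⟩ := hlp.2 β hβ
      obtain ⟨δ, hδ, hβδ, hδγ⟩ := hγD.2.2 β hβγ
      exact ⟨δ, hδ, hβδ, hδγ.trans hγα⟩
    · intro β hβ
      obtain ⟨α, h1, h2, h3⟩ := key β hβ
      exact ⟨α, ⟨h2, h3⟩, h1⟩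
  obtain ⟨α, hαS, hαη, hαlp⟩ := hstat D hDclub
  -- D above α is also club
  have hD2club : IsClubIn (D ∩ Set.Ioi α) η := by
    refine ⟨fun x hx => hx.1.1, ?_, ?_⟩
    · intro x hx hlp
      have hlp' : IsLimitPt D x := ⟨hlp.1, fun β hβ => by
        obtain ⟨γ, hγ, h1, h2⟩ := hlp.2 β hβ; exact ⟨γ, hγ.1, h1, h2⟩⟩
      have hxD : x ∈ D := hDclub.2.1 x hx hlp'
      obtain ⟨γ, hγ, _, h2⟩ := hlp.2 0 hlp.1
      exact ⟨hxD, lt_trans hγ.2 h2⟩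
    · intro β hβ
      obtain ⟨x, h1, h2, h3⟩ := key (max β α) (max_lt hβ hαη)
      exact ⟨x, ⟨⟨h2, h3⟩, lt_of_le_of_lt (le_max_right _ _) h1⟩,
        lt_of_le_of_lt (le_max_left _ _) h1⟩
  obtain ⟨γ, hγS, ⟨⟨hγη, hγlp⟩, hαγ⟩⟩ := hstat _ hD2club
  have hγlim : Order.IsSuccLimit γ := by
    refine Ordinal.isSuccLimit_iff.mpr ⟨ne_of_gt hγlp.1, Order.isSuccPrelimit_of_succ_lt fun a ha => ?_⟩
    obtain ⟨δ, _, h1, h2⟩ := hγlp.2 a ha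
    exact lt_of_le_of_lt (Order.succ_le_of_lt h1) h2
  have hγκ : γ < κ.ord := lt_trans hγη hηκ
  have hCγ : C γ = C η ∩ Set.Iio γ := hcoh η hηκ γ hγlp
  have hCα : C α = C η ∩ Set.Iio α := hcoh η hηκ α hαlp
  have hαlpγ : IsLimitPt (C γ) α := by
    refine ⟨hαlp.1, fun β hβ => ?_⟩
    obtain ⟨δ, hδ, h1, h2⟩ := hαlp.2 β hβ
    exact ⟨δ, by rw [hCγ]; exact ⟨hδ, lt_trans h2 hαγ⟩, h1, h2⟩
  have hαCγ : α ∈ C γ := (hclub γ hγκ hγlim).2.1 α hαγ hαlpγ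
  have heq : C α = C γ ∩ Set.Iio α := by
    rw [hCα, hCγ]
    ext x
    constructor
    · rintro ⟨h1, h2⟩; exact ⟨⟨h1, (lt_trans h2 hαγ : x < γ)⟩, h2⟩
    · rintro ⟨⟨h1, _⟩, h2⟩; exact ⟨h1, h2⟩
  have hlt : otp (C α) < otp (C γ) := heq ▸ otp_inter_lt hαCγ
  rw [hξ α hαS, hξ γ hγS] at hlt
  exact lt_irrefl _ hlt
end
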